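/- Let p be an odd prime and let G_E be the multi-EGS group defined by a datum E = (E^{(1)},…,E^{(p)}). Then G_E is a contracting group whose nucleus is N_E = ⟨a⟩ ∪ ⋃_{l=1}^{p} ⟨b^{(l)}_i : 1 ≤ i ≤ r_l⟩, i.e., N_E is the inclusion-minimal finite subset N ⊆ G_E with the property that there exists k ≥ 1 such that for every product n₁n₂ of two elements of S ∪ N (where S is the symmetric generating set ⟨a⟩ ∪ ⋃_l ⟨b^{(l)}_i⟩) and every word v ∈ X^k, the section (n₁n₂)|_v lies in N. -/

import Mathlib

/-- An automorphism of the rooted `p`-ary tree, encoded by its portrait: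
at every vertex (a finite word over `Fin p`) it records the permutation of the
`p` subtrees hanging at that vertex. -/
@[ext]
structure TreeAut (p : ℕ) where
  perm : List (Fin p) → Equiv.Perm (Fin p)

namespace TreeAut

variable {p : ℕ}

/-- The section of a tree automorphism at a first-level vertex `x`. -/
def sect (g : TreeAut p) (x : Fin p) : TreeAut p := ⟨fun v => g.perm (x :: v)⟩

/-- The section of a tree automorphism at an arbitrary vertex. -/
def sectV (g : TreeAut p) : List (Fin p) → TreeAut p
  | [] => g
  | x :: v => (g.sect x).sectV v

/-- The action of a tree automorphism on vertices (finite words over `Fin p`). -/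
def act (g : TreeAut p) : List (Fin p) → List (Fin p)
  | [] => []
  | x :: v => g.perm [] x :: (g.sect x).act v

/-- The inverse of the action of a tree automorphism on vertices. -/
def actInv (g : TreeAut p) : List (Fin p) → List (Fin p)
  | [] => []
  | x :: v => (g.perm []).symm x :: (g.sect ((g.perm []).symm x)).actInv v

instance : One (TreeAut p) := ⟨⟨fun _ => 1⟩⟩

/-- Composition convention as in the paper: `g * h` acts by `g` first, then `h`. -/
instance : Mul (TreeAut p) := ⟨fun g h => ⟨fun v => (g.perm v).trans (h.perm (g.act v))⟩⟩

instance : Inv (TreeAut p) := ⟨fun g => ⟨fun v => (g.perm (g.actInv v)).symm⟩⟩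

theorem perm_one (v : List (Fin p)) : (1 : TreeAut p).perm v = 1 := rfl

theorem perm_mul (g h : TreeAut p) (v : List (Fin p)) :
    (g * h).perm v = (g.perm v).trans (h.perm (g.act v)) := rfl

theorem perm_inv (g : TreeAut p) (v : List (Fin p)) :
    (g⁻¹).perm v = (g.perm (g.actInv v)).symm := rfl

theorem sect_one (x : Fin p) : (1 : TreeAut p).sect x = 1 := rfl

theorem sect_mul (g h : TreeAut p) (x : Fin p) :
    (g * h).sect x = g.sect x * h.sect (g.perm [] x) := rfl

theorem sect_inv (g : TreeAut p) (x : Fin p) :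
    (g⁻¹).sect x = (g.sect ((g.perm []).symm x))⁻¹ := rfl

theorem act_one : ∀ v : List (Fin p), (1 : TreeAut p).act v = v
  | [] => rfl
  | x :: v => by
    show (1 : Equiv.Perm (Fin p)) x :: ((1 : TreeAut p).sect x).act v = x :: v
    rw [sect_one, act_one v]
    rfl

theorem act_mul : ∀ (v : List (Fin p)) (g h : TreeAut p), (g * h).act v = h.act (g.act v)
  | [], _, _ => rfl
  | x :: v, g, h => by
    show (g * h).perm [] x :: ((g * h).sect x).act v = _
    rw [sect_mul, act_mul v]
    rfl

theorem act_inv : ∀ (v : List (Fin p)) (g : TreeAut p), (g⁻¹).act v = g.actInv v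
  | [], _ => rfl
  | x :: v, g => by
    show (g⁻¹).perm [] x :: ((g⁻¹).sect x).act v = _
    rw [sect_inv, act_inv v]
    rfl

instance : Group (TreeAut p) where
  mul_assoc g h k := by
    ext v y
    simp [perm_mul, act_mul, Equiv.trans_apply]
  one_mul g := by
    ext v y
    simp [perm_mul, perm_one, act_one]
  mul_one g := by
    ext v y
    simp [perm_mul, perm_one]
  inv_mul_cancel g := by
    ext v y
    simp [perm_mul, perm_inv, perm_one, act_inv]

end TreeAut

/-- The rooted automorphism `a = (1,…,1)ε`, where `ε = (0 1 … p-1)` is the cyclic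
rotation `x ↦ x + 1` of `Fin p`. -/
def rot (p : ℕ) [NeZero p] : TreeAut p :=
  ⟨fun v => if v = [] then Equiv.addRight (1 : Fin p) else 1⟩

/-- The components of a defining vector `v ∈ (ℤ/pℤ)^{p-1}`, read `p`-periodically:
for `1 ≤ n ≤ p-1`, `vcomp v n` is the `n`-th component of `v` (and `vcomp v n = 0`
when `n ≡ 0 mod p`). -/
def vcomp {p : ℕ} [NeZero p] (v : Fin (p - 1) → ZMod p) (n : ℕ) : ZMod p :=
  if h : n % p = 0 then 0
  else v ⟨n % p - 1, by
    have h2 : n % p < p := Nat.mod_lt _ (Nat.pos_of_ne_zero (NeZero.ne p))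
    omega⟩

/-- `N` is a quasinucleus with constant `k` for the self-similar group generated by the
symmetric set `S`: all sections at level `k` of products of two elements of `S ∪ N` lie in `N`. -/
def IsQuasiNucleusWith (p : ℕ) (S N : Set (TreeAut p)) (k : ℕ) : Prop :=
  ∀ n₁ ∈ S ∪ N, ∀ n₂ ∈ S ∪ N, ∀ v : List (Fin p), v.length = k → (n₁ * n₂).sectV v ∈ N

/-- `N` is the nucleus of the group `G` with symmetric generating set `S`:
`N` is the inclusion-minimal finite subset of `G` that is a quasinucleus for some
level constant `k ≥ 1`. -/
def IsNucleusOf (p : ℕ) (S : Set (TreeAut p)) (G : Subgroup (TreeAut p)) (N : Set (TreeAut p)) : Prop :=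
  (N ⊆ (G : Set (TreeAut p)) ∧ N.Finite ∧ ∃ k, 1 ≤ k ∧ IsQuasiNucleusWith p S N k) ∧
  ∀ N' : Set (TreeAut p), N' ⊆ (G : Set (TreeAut p)) → N'.Finite →
    (∃ k, 1 ≤ k ∧ IsQuasiNucleusWith p S N' k) → N ⊆ N'
/-- The defining wreath recursions of the generators of a multi-EGS group with datum
`E = (E^(1),…,E^(p))`: here Lean's `l : Fin p` stands for the paper's `l = l.val + 1`,
the vector `e l i : Fin (p-1) → ZMod p` is `e^(l)_i` (Lean's `n : Fin (p-1)` standing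
for the component index `n = n.val + 1 ∈ {1,…,p-1}`), each `E^(l)` consists of `r l`
linearly independent vectors, at least one `r l` is positive, and the generator
`b l i = b^(l)_i` fixes all first-level vertices, has section `b^(l)_i` at the vertex
`l - 1` and section `a^{e^(l)_{i,n}}` at the vertex `l - 1 + n (mod p)` for `1 ≤ n ≤ p-1`. -/
def IsMultiEGSDatum (p : ℕ) [NeZero p] {r : Fin p → ℕ}
    (e : ∀ l : Fin p, Fin (r l) → Fin (p - 1) → ZMod p)
    (b : ∀ l : Fin p, Fin (r l) → TreeAut p) : Prop :=
  (∃ l, 0 < r l) ∧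
  (∀ l, LinearIndependent (ZMod p) (e l)) ∧
  (∀ (l : Fin p) (i : Fin (r l)),
    (∀ x : Fin p, (b l i).act [x] = [x]) ∧
    (b l i).sect l = b l i ∧
    ∀ n : Fin (p - 1),
      (b l i).sect (l + Fin.ofNat p (n.val + 1 : ℕ)) = rot p ^ (e l i n).val)

/-- The generating set `{a} ∪ {b^(l)_i}` of a multi-EGS group. -/
def multiEGSGens (p : ℕ) [NeZero p] {r : Fin p → ℕ}
    (b : ∀ l : Fin p, Fin (r l) → TreeAut p) : Set (TreeAut p) :=
  insert (rot p) {g | ∃ l i, b l i = g}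

/-- The multi-EGS group `G_E = ⟨a, b^(l)_i⟩`. -/
def multiEGS (p : ℕ) [NeZero p] {r : Fin p → ℕ}
    (b : ∀ l : Fin p, Fin (r l) → TreeAut p) : Subgroup (TreeAut p) :=
  Subgroup.closure (multiEGSGens p b)

theorem rot_mem_multiEGS (p : ℕ) [NeZero p] {r : Fin p → ℕ}
    (b : ∀ l : Fin p, Fin (r l) → TreeAut p) : rot p ∈ multiEGS p b :=
  Subgroup.subset_closure (Set.mem_insert _ _)

theorem b_mem_multiEGS (p : ℕ) [NeZero p] {r : Fin p → ℕ}
    (b : ∀ l : Fin p, Fin (r l) → TreeAut p) (l : Fin p) (i : Fin (r l)) :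
    b l i ∈ multiEGS p b :=
  Subgroup.subset_closure (Set.mem_insert_of_mem _ ⟨l, i, rfl⟩)

/-- The subgroup `B_l = ⟨b^(l)_1, …, b^(l)_{r_l}⟩`. -/
def Bsub (p : ℕ) [NeZero p] {r : Fin p → ℕ}
    (b : ∀ l : Fin p, Fin (r l) → TreeAut p) (l : Fin p) : Subgroup (TreeAut p) :=
  Subgroup.closure {g | ∃ i, b l i = g}

/-- The set `N_E = ⟨a⟩ ∪ ⋃_{l=1}^p B_l`. -/
def nucleusSet (p : ℕ) [NeZero p] {r : Fin p → ℕ}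
    (b : ∀ l : Fin p, Fin (r l) → TreeAut p) : Set (TreeAut p) :=
  (Subgroup.zpowers (rot p) : Set (TreeAut p)) ∪
    ⋃ l : Fin p, (Bsub p b l : Set (TreeAut p))

/-!
Elements of `⟨a⟩` have trivial first-level sections, and every `g ∈ B_l` fixes the first level,
satisfies `g|_l = g` and has its other first-level sections in `⟨a⟩`. Hence `g ↦ (g|_x)_{x ≠ l}`
embeds `B_l` into `⟨a⟩^{p-1}`, so `N_E` is finite, and `N_E` is closed under sections. A
first-level section of a product of two elements of `N_E` is a product of an element of `⟨a⟩`
and an element of `N_E`, so all level-2 sections of such products lie in `N_E`. Conversely,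
`g ∈ B_l` is its own section at `l^k`, and every power of `a` is a section at `l^(k-1) x` of a
power of some `b^(l)_i`; so every quasinucleus contains `N_E`.
-/

namespace TreeAut

variable {p : ℕ}

theorem sectV_append (g : TreeAut p) (u w : List (Fin p)) :
    g.sectV (u ++ w) = (g.sectV u).sectV w := by
  induction u generalizing g with
  | nil => rfl
  | cons x u ih => exact ih (g.sect x)

theorem sectV_replicate_of_sect_eq {g : TreeAut p} {x : Fin p} (hg : g.sect x = g) :
    ∀ k, g.sectV (List.replicate k x) = g
  | 0 => rfl
  | k + 1 => by
    change (g.sect x).sectV (List.replicate k x) = g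
    rw [hg, sectV_replicate_of_sect_eq hg k]

theorem perm_nil_eq_one_of_act_singleton (g : TreeAut p) (hg : ∀ x, g.act [x] = [x]) :
    g.perm [] = 1 :=
  Equiv.ext fun x => List.head_eq_of_cons_eq (hg x)

def rootStab (p : ℕ) : Subgroup (TreeAut p) where
  carrier := {g | g.perm [] = 1}
  one_mem' := rfl
  mul_mem' {g h} hg hh := by
    change (g.perm []).trans (h.perm []) = 1
    rw [hg, hh]
    rfl
  inv_mem' {g} hg := by
    change (g.perm []).symm = 1
    rw [show g.perm [] = 1 from hg]
    rfl

theorem sect_mul_of_mem_rootStab {g : TreeAut p} (hg : g ∈ rootStab p) (h : TreeAut p)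
    (x : Fin p) : (g * h).sect x = g.sect x * h.sect x := by
  rw [sect_mul, show g.perm [] = 1 from hg]
  rfl

theorem sect_pow_of_mem_rootStab {g : TreeAut p} (hg : g ∈ rootStab p) (x : Fin p) :
    ∀ n : ℕ, (g ^ n).sect x = g.sect x ^ n
  | 0 => rfl
  | n + 1 => by
    rw [pow_succ', sect_mul_of_mem_rootStab hg, sect_pow_of_mem_rootStab hg x n, pow_succ']

def rooted (p : ℕ) : Subgroup (TreeAut p) where
  carrier := {g | ∀ x, g.sect x = 1}
  one_mem' _ := rfl
  mul_mem' {g h} hg hh x := by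
    rw [sect_mul, hg, hh, one_mul]
  inv_mem' {g} hg x := by
    rw [sect_inv, hg, inv_one]

theorem eq_one_of_mem_rooted {g : TreeAut p} (hg : g ∈ rooted p) (h1 : g.perm [] = 1) :
    g = 1 := by
  ext v : 2
  cases v with
  | nil => exact h1
  | cons x w => exact congrArg (fun s => s.perm w) (hg x)

def directedSubgroup (l : Fin p) (K : Subgroup (TreeAut p)) : Subgroup (TreeAut p) where
  carrier := {g | g ∈ rootStab p ∧ g.sect l = g ∧ ∀ x ≠ l, g.sect x ∈ K}
  one_mem' := ⟨one_mem _, rfl, fun _ _ => one_mem K⟩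
  mul_mem' {g h} := by
    rintro ⟨hg, hgl, hgK⟩ ⟨hh, hhl, hhK⟩
    refine ⟨mul_mem hg hh, ?_, fun x hx => ?_⟩
    · rw [sect_mul_of_mem_rootStab hg, hgl, hhl]
    · rw [sect_mul_of_mem_rootStab hg]
      exact mul_mem (hgK x hx) (hhK x hx)
  inv_mem' {g} := by
    rintro ⟨hg, hgl, hgK⟩
    have hsect : ∀ x, (g⁻¹).sect x = (g.sect x)⁻¹ := by
      intro x
      rw [sect_inv, show g.perm [] = 1 from hg]
      rfl
    refine ⟨inv_mem hg, by rw [hsect, hgl], fun x hx => ?_⟩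
    rw [hsect]
    exact inv_mem (hgK x hx)

section Directed

variable {l : Fin p} {K : Subgroup (TreeAut p)}

theorem eq_of_mem_directedSubgroup {g h : TreeAut p} (hg : g ∈ directedSubgroup l K)
    (hh : h ∈ directedSubgroup l K) (hgh : ∀ x ≠ l, g.sect x = h.sect x) : g = h := by
  ext v : 2
  induction v with
  | nil => exact hg.1.trans hh.1.symm
  | cons x w ih =>
    change (g.sect x).perm w = (h.sect x).perm w
    by_cases hx : x = l
    · rw [hx, hg.2.1, hh.2.1, ih]
    · rw [hgh x hx]

theorem finite_directedSubgroup (hK : (K : Set (TreeAut p)).Finite) :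
    (directedSubgroup l K : Set (TreeAut p)).Finite := by
  have : Finite K := hK.to_subtype
  refine Set.finite_coe_iff.mp (Finite.of_injective
    (fun g (x : {x // x ≠ l}) => (⟨g.1.sect x, g.2.2.2 x x.2⟩ : K)) fun g h hgh => ?_)
  refine Subtype.ext (eq_of_mem_directedSubgroup g.2 h.2 fun x hx => ?_)
  simpa using congrFun hgh ⟨x, hx⟩

end Directed

def subgroupUnion (K : Subgroup (TreeAut p)) (B : Fin p → Subgroup (TreeAut p)) :
    Set (TreeAut p) :=
  (K : Set (TreeAut p)) ∪ ⋃ l, (B l : Set (TreeAut p))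

variable {K : Subgroup (TreeAut p)} {B : Fin p → Subgroup (TreeAut p)}

theorem mem_subgroupUnion {g : TreeAut p} : g ∈ subgroupUnion K B ↔ g ∈ K ∨ ∃ l, g ∈ B l := by
  simp only [subgroupUnion, Set.mem_union, Set.mem_iUnion, SetLike.mem_coe]

theorem one_mem_subgroupUnion : (1 : TreeAut p) ∈ subgroupUnion K B :=
  mem_subgroupUnion.mpr (Or.inl (one_mem K))

theorem finite_subgroupUnion (hK : (K : Set (TreeAut p)).Finite)
    (hB : ∀ l, (B l : Set (TreeAut p)).Finite) : (subgroupUnion K B).Finite :=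
  hK.union (Set.finite_iUnion hB)

open Pointwise

theorem sect_mem_subgroupUnion (hK : K ≤ rooted p) (hB : ∀ l, B l ≤ directedSubgroup l K)
    {g : TreeAut p} (hg : g ∈ subgroupUnion K B) (x : Fin p) :
    g.sect x ∈ subgroupUnion K B := by
  rcases mem_subgroupUnion.mp hg with hgK | ⟨l, hgB⟩
  · rw [hK hgK x]
    exact one_mem_subgroupUnion
  · obtain ⟨-, hgl, hgK⟩ := hB l hgB
    by_cases hx : x = l
    · rwa [hx, hgl]
    · exact mem_subgroupUnion.mpr (Or.inl (hgK x hx))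

theorem sect_mem_subgroupUnion_of_mem_mul (hK : K ≤ rooted p)
    (hB : ∀ l, B l ≤ directedSubgroup l K) {g : TreeAut p}
    (hg : g ∈ (K : Set (TreeAut p)) * subgroupUnion K B ∪ subgroupUnion K B * K)
    (x : Fin p) : g.sect x ∈ subgroupUnion K B := by
  rcases hg with ⟨k, hk, n, hn, rfl⟩ | ⟨n, hn, k, hk, rfl⟩
  · rw [sect_mul, hK hk, one_mul]
    exact sect_mem_subgroupUnion hK hB hn _
  · rw [sect_mul, hK hk, mul_one]
    exact sect_mem_subgroupUnion hK hB hn x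

/-- Two elements of different `B l` multiply sectionwise, and at every vertex at least one of
them has its section in `K`. -/
theorem sect_mul_mem_mul (hK : K ≤ rooted p) (hB : ∀ l, B l ≤ directedSubgroup l K)
    {g h : TreeAut p} (hg : g ∈ subgroupUnion K B)
    (hh : h ∈ subgroupUnion K B) (x : Fin p) :
    (g * h).sect x ∈ (K : Set (TreeAut p)) * subgroupUnion K B ∪ subgroupUnion K B * K := by
  have hmul_of_mem (f : TreeAut p) (hf : f ∈ subgroupUnion K B) :
      f ∈ (K : Set (TreeAut p)) * subgroupUnion K B ∪ subgroupUnion K B * K :=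
    Or.inl ⟨1, one_mem K, f, hf, one_mul f⟩
  rcases mem_subgroupUnion.mp hg with hgK | ⟨l, hgB⟩
  · rw [sect_mul, hK hgK, one_mul]
    exact hmul_of_mem _ (sect_mem_subgroupUnion hK hB hh _)
  rcases mem_subgroupUnion.mp hh with hhK | ⟨m, hhB⟩
  · rw [sect_mul, hK hhK, mul_one]
    exact hmul_of_mem _ (sect_mem_subgroupUnion hK hB hg x)
  by_cases hlm : l = m
  · subst hlm
    exact hmul_of_mem _ (sect_mem_subgroupUnion hK hB
      (mem_subgroupUnion.mpr (Or.inr ⟨l, mul_mem hgB hhB⟩)) x)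
  obtain ⟨hg1, hgl, hgK⟩ := hB l hgB
  obtain ⟨-, -, hhK⟩ := hB m hhB
  rw [sect_mul_of_mem_rootStab hg1]
  by_cases hx : x = l
  · subst hx
    exact Or.inr ⟨_, sect_mem_subgroupUnion hK hB hg x, _, hhK x hlm, rfl⟩
  · exact Or.inl ⟨_, hgK x hx, _, sect_mem_subgroupUnion hK hB hh x, rfl⟩

theorem isQuasiNucleusWith_subgroupUnion (hK : K ≤ rooted p)
    (hB : ∀ l, B l ≤ directedSubgroup l K) :
    IsQuasiNucleusWith p (subgroupUnion K B) (subgroupUnion K B) 2 := by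
  intro g hg h hh v hv
  rw [Set.union_self] at hg hh
  match v, hv with
  | [x, y], _ =>
    exact sect_mem_subgroupUnion_of_mem_mul hK hB (sect_mul_mem_mul hK hB hg hh x) y

theorem exists_sectV_eq_of_mem_subgroupUnion (hB : ∀ l, B l ≤ directedSubgroup l K)
    (hKB : ∀ g ∈ K, ∃ l, ∃ h ∈ B l, ∃ x, h.sect x = g) {g : TreeAut p}
    (hg : g ∈ subgroupUnion K B) (k : ℕ) :
    ∃ h ∈ subgroupUnion K B, ∃ v : List (Fin p), v.length = k ∧ h.sectV v = g := by
  rcases mem_subgroupUnion.mp hg with hgK | ⟨l, hgB⟩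
  · cases k with
    | zero => exact ⟨g, hg, [], rfl, rfl⟩
    | succ k =>
      obtain ⟨l, h, hhB, x, rfl⟩ := hKB g hgK
      refine ⟨h, mem_subgroupUnion.mpr (Or.inr ⟨l, hhB⟩), List.replicate k l ++ [x],
        by simp, ?_⟩
      rw [sectV_append, sectV_replicate_of_sect_eq (hB l hhB).2.1]
      rfl
  · exact ⟨g, hg, List.replicate k l, List.length_replicate,
      sectV_replicate_of_sect_eq (hB l hgB).2.1 k⟩

end TreeAut

theorem IsQuasiNucleusWith.subset {p k : ℕ} {S N N' : Set (TreeAut p)}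
    (hq : IsQuasiNucleusWith p S N' k) (h1 : 1 ∈ S)
    (hN : ∀ g ∈ N, ∃ h ∈ S, ∃ v : List (Fin p), v.length = k ∧ h.sectV v = g) : N ⊆ N' := by
  intro g hg
  obtain ⟨h, hS, v, hv, rfl⟩ := hN g hg
  simpa using hq h (Or.inl hS) 1 (Or.inl h1) v hv

theorem exists_pow_pow_eq_of_mem_zpowers {G : Type*} [Group G] {x g : G} {p c : ℕ}
    (hp : p.Prime) (hx : x ^ p = 1) (hc : ¬p ∣ c) (hg : g ∈ Subgroup.zpowers x) :
    ∃ t : ℕ, (x ^ c) ^ t = g := by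
  have hcop : c.Coprime (orderOf x) :=
    ((hp.coprime_iff_not_dvd.mpr hc).symm).coprime_dvd_right (orderOf_dvd_of_pow_eq_one hx)
  have hle : Subgroup.zpowers x ≤ Subgroup.zpowers (x ^ c) :=
    Subgroup.zpowers_le.mpr (mem_zpowers_pow_iff.mpr hcop)
  exact (isOfFinOrder_iff_pow_eq_one.mpr ⟨p, hp.pos, hx⟩).pow.mem_powers_iff_mem_zpowers.mpr
    (hle hg)

section MultiEGS

open TreeAut

variable {p : ℕ} [NeZero p]

theorem rot_mem_rooted : rot p ∈ rooted p := fun _ => by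
  ext v y
  simp [rot, TreeAut.sect, TreeAut.perm_one]

theorem perm_nil_rot_pow (n : ℕ) : (rot p ^ n).perm [] = Equiv.addRight (1 : Fin p) ^ n := by
  induction n with
  | zero => rfl
  | succ n ih =>
    rw [pow_succ, perm_mul, ih, pow_succ']
    rfl

theorem rot_pow_self : rot p ^ p = 1 :=
  eq_one_of_mem_rooted (pow_mem rot_mem_rooted p) (by
    rw [perm_nil_rot_pow, Equiv.nsmul_addRight]
    have hp : p • (1 : Fin p) = 0 := by simpa using card_nsmul_eq_zero (G := Fin p) (x := 1)
    rw [hp, Equiv.addRight_zero])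

theorem finite_zpowers_rot : (Subgroup.zpowers (rot p) : Set (TreeAut p)).Finite :=
  (isOfFinOrder_iff_pow_eq_one.mpr ⟨p, Nat.pos_of_neZero p, rot_pow_self⟩).finite_zpowers

theorem Fin.exists_eq_add_ofNat_succ {x l : Fin p} (hx : x ≠ l) :
    ∃ n : Fin (p - 1), x = l + Fin.ofNat p (n.val + 1) := by
  have hd : (x - l).val ≠ 0 := fun h0 => hx (sub_eq_zero.mp (Fin.ext h0))
  have hlt := (x - l).isLt
  refine ⟨⟨(x - l).val - 1, by omega⟩, ?_⟩
  rw [show (x - l).val - 1 + 1 = (x - l).val by omega, Fin.ofNat_val_eq_self, add_sub_cancel]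

variable {r : Fin p → ℕ} {e : ∀ l : Fin p, Fin (r l) → Fin (p - 1) → ZMod p}
  {b : ∀ l : Fin p, Fin (r l) → TreeAut p}

theorem nucleusSet_subset_multiEGS : nucleusSet p b ⊆ multiEGS p b :=
  Set.union_subset (Subgroup.zpowers_le.mpr (rot_mem_multiEGS p b)) <|
    Set.iUnion_subset fun l => (Subgroup.closure_le _).mpr <| by
      rintro _ ⟨i, rfl⟩
      exact b_mem_multiEGS p b l i

theorem IsMultiEGSDatum.mem_directedSubgroup (hdatum : IsMultiEGSDatum p e b) (l : Fin p)
    (i : Fin (r l)) : b l i ∈ directedSubgroup l (Subgroup.zpowers (rot p)) := by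
  obtain ⟨hact, hsl, hsn⟩ := hdatum.2.2 l i
  refine ⟨perm_nil_eq_one_of_act_singleton _ hact, hsl, fun x hx => ?_⟩
  obtain ⟨n, rfl⟩ := Fin.exists_eq_add_ofNat_succ hx
  rw [hsn n]
  exact pow_mem (Subgroup.mem_zpowers _) _

theorem IsMultiEGSDatum.Bsub_le_directedSubgroup (hdatum : IsMultiEGSDatum p e b) (l : Fin p) :
    Bsub p b l ≤ directedSubgroup l (Subgroup.zpowers (rot p)) :=
  (Subgroup.closure_le _).mpr <| by
    rintro _ ⟨i, rfl⟩
    exact hdatum.mem_directedSubgroup l i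

/-- A nonzero entry `c` of a defining vector gives the section `a ^ c` of some `b`, and `a ^ c`
generates `⟨a⟩` because `p` is prime. -/
theorem IsMultiEGSDatum.exists_sect_eq_of_mem_zpowers [Fact p.Prime]
    (hdatum : IsMultiEGSDatum p e b) {g : TreeAut p} (hg : g ∈ Subgroup.zpowers (rot p)) :
    ∃ l, ∃ h ∈ Bsub p b l, ∃ x, h.sect x = g := by
  obtain ⟨l, hl⟩ := hdatum.1
  let i : Fin (r l) := ⟨0, hl⟩
  obtain ⟨n, hn⟩ := Function.ne_iff.mp ((hdatum.2.1 l).ne_zero i)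
  have hc : ¬p ∣ (e l i n).val := by
    rw [← ZMod.natCast_eq_zero_iff, ZMod.natCast_zmod_val]
    exact hn
  obtain ⟨t, ht⟩ := exists_pow_pow_eq_of_mem_zpowers Fact.out rot_pow_self hc hg
  have hb : b l i ∈ Bsub p b l := Subgroup.subset_closure ⟨i, rfl⟩
  refine ⟨l, b l i ^ t, pow_mem hb t, l + Fin.ofNat p (n.val + 1), ?_⟩
  rw [sect_pow_of_mem_rootStab (hdatum.mem_directedSubgroup l i).1, (hdatum.2.2 l i).2.2 n, ht]

end MultiEGS

theorem multiEGS_contracting_nucleus_general (p : ℕ) [Fact p.Prime] [NeZero p]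
    (r : Fin p → ℕ)
    (e : ∀ l : Fin p, Fin (r l) → Fin (p - 1) → ZMod p)
    (b : ∀ l : Fin p, Fin (r l) → TreeAut p)
    (hdatum : IsMultiEGSDatum p e b) :
    IsNucleusOf p (nucleusSet p b) (multiEGS p b) (nucleusSet p b) := by
  have hK : Subgroup.zpowers (rot p) ≤ TreeAut.rooted p := Subgroup.zpowers_le.mpr rot_mem_rooted
  have hB := hdatum.Bsub_le_directedSubgroup
  have hfin : (nucleusSet p b).Finite := TreeAut.finite_subgroupUnion finite_zpowers_rot fun l =>
    (TreeAut.finite_directedSubgroup finite_zpowers_rot).subset (hB l)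
  refine ⟨⟨nucleusSet_subset_multiEGS, hfin, 2, one_le_two,
    TreeAut.isQuasiNucleusWith_subgroupUnion hK hB⟩, ?_⟩
  rintro N' - - ⟨k, -, hq⟩
  exact hq.subset TreeAut.one_mem_subgroupUnion fun g hg =>
    TreeAut.exists_sectV_eq_of_mem_subgroupUnion hB
      (fun _ => hdatum.exists_sect_eq_of_mem_zpowers) hg k

/-- **Theorem B (contracting property and nucleus of multi-EGS groups).**
For an odd prime `p`, the multi-EGS group `G_E` defined by a datum `E` is a
contracting group whose nucleus is `N_E = ⟨a⟩ ∪ ⋃_{l=1}^p ⟨b^(l)_i : 1 ≤ i ≤ r_l⟩`: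
`N_E` is the inclusion-minimal finite subset `N ⊆ G_E` for which there is `k ≥ 1`
such that every section at level `k` of a product of two elements of `S ∪ N` lies
in `N`, where `S = ⟨a⟩ ∪ ⋃_l ⟨b^(l)_i⟩` is the symmetric generating set. -/
theorem multiEGS_contracting_nucleus (p : ℕ) [Fact p.Prime] [NeZero p] (hp : Odd p)
    (r : Fin p → ℕ)
    (e : ∀ l : Fin p, Fin (r l) → Fin (p - 1) → ZMod p)
    (b : ∀ l : Fin p, Fin (r l) → TreeAut p)
    (hdatum : IsMultiEGSDatum p e b) :
    IsNucleusOf p (nucleusSet p b) (multiEGS p b) (nucleusSet p b) :=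
  multiEGS_contracting_nucleus_general p r e b hdatum
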